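/- arXiv:math/9905013 — 3 statements merged into one kernel-verified Lean document; each statement's English description precedes it below -/
import Mathlib

section
/- For every k ∈ H one has Σ S(S(k₍₂₎)) · S̃(k₍₁₎) = δ(k) · 1 in H. -/
open scoped TensorProduct
open Coalgebra

/-- The `δ`-twisted antipode `S̃(h) = Σ δ(h₍₁₎) S(h₍₂₎)` of a Hopf algebra `H`
with character `δ : H → k`. -/
noncomputable def twistedAntipode (k H : Type) [Field k] [Ring H] [HopfAlgebra k H]
    (δ : H →ₐ[k] k) : H →ₗ[k] H :=
  (TensorProduct.lid k H).toLinearMap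
    ∘ₗ TensorProduct.map δ.toLinearMap (HopfAlgebra.antipode (R := k))
    ∘ₗ Coalgebra.comul

section Conv

variable {R : Type*} [CommSemiring R] {C : Type*} [AddCommMonoid C] [Module R C] [Coalgebra R C]
  {A : Type*} [Semiring A] [Algebra R A]

/-- Convolution product on linear maps from a coalgebra to an algebra. -/
noncomputable def myConv (f g : C →ₗ[R] A) : C →ₗ[R] A :=
  LinearMap.mul' R A ∘ₗ TensorProduct.map f g ∘ₗ Coalgebra.comul

/-- Convolution unit. -/
noncomputable def myConvUnit : C →ₗ[R] A :=
  Algebra.linearMap R A ∘ₗ Coalgebra.counit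

lemma myConv_repr {ι : Type*} (f g : C →ₗ[R] A) (c : C) (re : Coalgebra.Repr R c ι) :
    myConv f g c = ∑ i ∈ re.index, f (re.left i) * g (re.right i) := by
  simp only [myConv, LinearMap.comp_apply, ← re.eq, map_sum, TensorProduct.map_tmul,
    LinearMap.mul'_apply]

lemma sum_counit_smul {ι : Type*} (c : C) (re : Coalgebra.Repr R c ι) :
    ∑ i ∈ re.index, Coalgebra.counit (R := R) (re.left i) • re.right i = c := by
  have := congrArg (TensorProduct.lid R C) (Coalgebra.sum_counit_tmul_eq re)
  simp only [map_sum, TensorProduct.lid_tmul, one_smul] at this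
  exact this

lemma sum_smul_counit {ι : Type*} (c : C) (re : Coalgebra.Repr R c ι) :
    ∑ i ∈ re.index, Coalgebra.counit (R := R) (re.right i) • re.left i = c := by
  have := congrArg (TensorProduct.rid R C) (Coalgebra.sum_tmul_counit_eq re)
  simp only [map_sum, TensorProduct.rid_tmul, one_smul] at this
  exact this

lemma myConv_unit_left (f : C →ₗ[R] A) : myConv myConvUnit f = f := by
  ext c
  rw [myConv_repr _ _ c (ℛ R c)]
  simp only [myConvUnit, LinearMap.comp_apply, Algebra.linearMap_apply]
  calc ∑ i ∈ (ℛ R c).index, algebraMap R A (counit ((ℛ R c).left i)) * f ((ℛ R c).right i)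
      = ∑ i ∈ (ℛ R c).index, f (counit (R := R) ((ℛ R c).left i) • (ℛ R c).right i) := by
        simp [Algebra.smul_def]
    _ = f c := by rw [← map_sum, sum_counit_smul c (ℛ R c)]

lemma myConv_unit_right (f : C →ₗ[R] A) : myConv f myConvUnit = f := by
  ext c
  rw [myConv_repr _ _ c (ℛ R c)]
  simp only [myConvUnit, LinearMap.comp_apply, Algebra.linearMap_apply]
  calc ∑ i ∈ (ℛ R c).index, f ((ℛ R c).left i) * algebraMap R A (counit ((ℛ R c).right i))
      = ∑ i ∈ (ℛ R c).index, f (counit (R := R) ((ℛ R c).right i) • (ℛ R c).left i) := by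
        simp [Algebra.smul_def, Algebra.commutes, mul_comm]
    _ = f c := by rw [← map_sum, sum_smul_counit c (ℛ R c)]

lemma myConv_assoc (f g h : C →ₗ[R] A) :
    myConv (myConv f g) h = myConv f (myConv g h) := by
  ext c
  have key := Coalgebra.sum_map_tmul_tmul_eq f g h c (repr := ℛ R c)
    (a₁ := fun i => ℛ R ((ℛ R c).left i)) (a₂ := fun i => ℛ R ((ℛ R c).right i))
  apply_fun (LinearMap.mul' R A ∘ₗ LinearMap.lTensor A (LinearMap.mul' R A)) at key
  simp only [map_sum, LinearMap.comp_apply, LinearMap.lTensor_tmul, LinearMap.mul'_apply] at key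
  rw [myConv_repr _ _ c (ℛ R c), myConv_repr _ _ c (ℛ R c)]
  calc ∑ i ∈ (ℛ R c).index, myConv f g ((ℛ R c).left i) * h ((ℛ R c).right i)
      = ∑ i ∈ (ℛ R c).index, ∑ j ∈ (ℛ R ((ℛ R c).left i)).index,
          f ((ℛ R ((ℛ R c).left i)).left j) * ((g ((ℛ R ((ℛ R c).left i)).right j)) *
            h ((ℛ R c).right i)) := by
        refine Finset.sum_congr rfl fun i _ => ?_
        rw [myConv_repr _ _ _ (ℛ R ((ℛ R c).left i)), Finset.sum_mul]
        simp [mul_assoc]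
    _ = ∑ i ∈ (ℛ R c).index, f ((ℛ R c).left i) * myConv g h ((ℛ R c).right i) := by
        rw [← key]
        refine Finset.sum_congr rfl fun i _ => ?_
        rw [myConv_repr _ _ _ (ℛ R ((ℛ R c).right i)), Finset.mul_sum]

lemma myConv_inv_unique {f g g' : C →ₗ[R] A} (h1 : myConv g' f = myConvUnit)
    (h2 : myConv f g = myConvUnit) : g' = g := by
  have : myConv g' (myConv f g) = myConv (myConv g' f) g := (myConv_assoc _ _ _).symm
  rwa [h1, h2, myConv_unit_right, myConv_unit_left] at this

end Conv

section Hopf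

variable {k H : Type} [Field k] [Ring H] [HopfAlgebra k H]

open HopfAlgebra TensorProduct

/-- A Sweedler representation of a product from representations of the factors. -/
noncomputable def mulRepr {ι κ : Type*} {a b : H} (ra : Coalgebra.Repr k a ι) (rb : Coalgebra.Repr k b κ) :
    Coalgebra.Repr k (a * b) (ι × κ) where
  index := ra.index ×ˢ rb.index
  left p := ra.left p.1 * rb.left p.2
  right p := ra.right p.1 * rb.right p.2
  eq := by
    rw [Finset.sum_product, Bialgebra.comul_mul, ← ra.eq, ← rb.eq, Finset.sum_mul_sum]
    simp [Algebra.TensorProduct.tmul_mul_tmul]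

lemma antipode_one' : antipode (R := k) (A := H) 1 = 1 := by
  have := HopfAlgebra.mul_antipode_rTensor_comul_apply (R := k) (A := H) 1
  simpa [Algebra.TensorProduct.one_def] using this

lemma conv_antipode_id : myConv (antipode (R := k) (A := H)) LinearMap.id = myConvUnit := by
  exact HopfAlgebra.mul_antipode_rTensor_comul

lemma conv_id_antipode : myConv LinearMap.id (antipode (R := k) (A := H)) = myConvUnit := by
  exact HopfAlgebra.mul_antipode_lTensor_comul

/-- Antipode is anti-multiplicative. -/
lemma antipode_mul' (a b : H) :
    antipode (R := k) (a * b) = antipode (R := k) b * antipode (R := k) a := by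
  -- convolution on H ⊗ H → H
  set M : H ⊗[k] H →ₗ[k] H := LinearMap.mul' k H with hM
  set F : H ⊗[k] H →ₗ[k] H := antipode (R := k) ∘ₗ M with hF
  set G : H ⊗[k] H →ₗ[k] H := M ∘ₗ (TensorProduct.comm k H H).toLinearMap
      ∘ₗ TensorProduct.map (antipode (R := k)) (antipode (R := k)) with hG
  have hMF : myConv M F = myConvUnit := by
    apply TensorProduct.ext'
    intro x y
    have hx := ℛ k x; have hy := ℛ k y
    rw [myConv_repr M F (x ⊗ₜ y)
      ⟨(ℛ k x).index ×ˢ (ℛ k y).index,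
        (fun p => (ℛ k x).left p.1 ⊗ₜ (ℛ k y).left p.2),
        (fun p => (ℛ k x).right p.1 ⊗ₜ (ℛ k y).right p.2), by
          rw [Finset.sum_product]
          simp only [TensorProduct.comul_tmul, LinearMap.comp_apply,
            TensorProduct.map_tmul, ← (ℛ k x).eq, ← (ℛ k y).eq, TensorProduct.sum_tmul,
            TensorProduct.tmul_sum, map_sum, LinearEquiv.coe_coe,
            TensorProduct.tensorTensorTensorComm_tmul,
            TensorProduct.AlgebraTensorModule.tensorTensorTensorComm_tmul]
          rw [Finset.sum_comm]⟩]
    simp only [hM, hF, LinearMap.comp_apply, LinearMap.mul'_apply]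
    have := HopfAlgebra.sum_mul_antipode_eq_algebraMap_counit (R := k) (mulRepr (ℛ k x) (ℛ k y))
    simp only [mulRepr, Finset.sum_product] at this ⊢
    rw [this]
    simp [myConvUnit, TensorProduct.counit_tmul, mul_comm]
  have hGM : myConv G M = myConvUnit := by
    apply TensorProduct.ext'
    intro x y
    rw [myConv_repr G M (x ⊗ₜ y)
      ⟨(ℛ k x).index ×ˢ (ℛ k y).index,
        (fun p => (ℛ k x).left p.1 ⊗ₜ (ℛ k y).left p.2),
        (fun p => (ℛ k x).right p.1 ⊗ₜ (ℛ k y).right p.2), by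
          rw [Finset.sum_product]
          simp only [TensorProduct.comul_tmul, LinearMap.comp_apply,
            TensorProduct.map_tmul, ← (ℛ k x).eq, ← (ℛ k y).eq, TensorProduct.sum_tmul,
            TensorProduct.tmul_sum, map_sum, LinearEquiv.coe_coe,
            TensorProduct.tensorTensorTensorComm_tmul,
            TensorProduct.AlgebraTensorModule.tensorTensorTensorComm_tmul]
          rw [Finset.sum_comm]⟩]
    simp only [hM, hG, LinearMap.comp_apply, LinearMap.mul'_apply, TensorProduct.map_tmul,
      LinearEquiv.coe_coe, TensorProduct.comm_tmul, Finset.sum_product]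
    have hsx := HopfAlgebra.sum_antipode_mul_eq_algebraMap_counit (R := k) (ℛ k x)
    calc ∑ i ∈ (ℛ k x).index, ∑ j ∈ (ℛ k y).index,
          antipode (R := k) ((ℛ k y).left j) * antipode (R := k) ((ℛ k x).left i) *
            ((ℛ k x).right i * (ℛ k y).right j)
        = ∑ j ∈ (ℛ k y).index, antipode (R := k) ((ℛ k y).left j) *
            ((∑ i ∈ (ℛ k x).index, antipode (R := k) ((ℛ k x).left i) * (ℛ k x).right i) *
              (ℛ k y).right j) := by
          rw [Finset.sum_comm]
          refine Finset.sum_congr rfl fun j _ => ?_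
          rw [Finset.sum_mul, Finset.mul_sum]
          refine Finset.sum_congr rfl fun i _ => ?_
          simp [mul_assoc]
      _ = myConvUnit (x ⊗ₜ[k] y) := by
          rw [hsx]
          simp only [myConvUnit, LinearMap.comp_apply, Algebra.linearMap_apply,
            TensorProduct.counit_tmul, TensorProduct.map_tmul,
            LinearMap.mul'_apply, smul_eq_mul, mul_comm (counit (R := k) y), map_mul]
          rw [← HopfAlgebra.sum_antipode_mul_eq_algebraMap_counit (R := k) (ℛ k y), Finset.mul_sum]
          refine Finset.sum_congr rfl fun j _ => ?_
          rw [← mul_assoc, ← Algebra.commutes, mul_assoc]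
  have h0 := myConv_inv_unique hGM hMF
  have h1 := congrArg (fun φ : H ⊗[k] H →ₗ[k] H => φ (a ⊗ₜ b)) h0
  simpa [hG, hF, hM] using h1.symm

/-- `Σ S²(h₂) S(h₁) = ε(h) 1`. -/
lemma sum_antipode_sq_mul {ι : Type*} (h : H) (re : Coalgebra.Repr k h ι) :
    ∑ i ∈ re.index, antipode (R := k) (antipode (R := k) (re.right i)) *
      antipode (R := k) (re.left i) = Coalgebra.counit (R := k) h • (1 : H) := by
  have : ∀ i ∈ re.index, antipode (R := k) (antipode (R := k) (re.right i)) *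
      antipode (R := k) (re.left i) =
      antipode (R := k) (re.left i * antipode (R := k) (re.right i)) := fun i _ =>
    (antipode_mul' _ _).symm
  rw [Finset.sum_congr rfl this, ← map_sum, HopfAlgebra.sum_mul_antipode_eq_algebraMap_counit (R := k) re,
    Algebra.algebraMap_eq_smul_one, map_smul, antipode_one']

end Hopf

/-- For every `h ∈ H` one has `Σ S(S(h₍₂₎)) · S̃(h₍₁₎) = δ(h) · 1`: the left-hand side
is obtained from `Δh = Σ h₍₁₎ ⊗ h₍₂₎` by applying `S̃ ⊗ S²`, flipping the two factors and
multiplying them. -/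
theorem antipode_sq_mul_twistedAntipode (k H : Type) [Field k] [Ring H] [HopfAlgebra k H]
    (δ : H →ₐ[k] k) (h : H) :
    LinearMap.mul' k H
      (TensorProduct.comm k H H
        (TensorProduct.map (twistedAntipode k H δ)
          (HopfAlgebra.antipode (R := k) ∘ₗ HopfAlgebra.antipode (R := k))
          (Coalgebra.comul h)))
      = δ h • (1 : H) := by
  classical
  have key := Coalgebra.sum_tmul_tmul_eq (R := k) (ℛ k h)
    (fun i => ℛ k ((ℛ k h).left i)) (fun i => ℛ k ((ℛ k h).right i))
  apply_fun ((TensorProduct.lid k H).toLinearMap ∘ₗ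
    TensorProduct.map δ.toLinearMap
      (LinearMap.mul' k H ∘ₗ (TensorProduct.comm k H H).toLinearMap ∘ₗ
        TensorProduct.map (HopfAlgebra.antipode (R := k))
          (HopfAlgebra.antipode (R := k) ∘ₗ HopfAlgebra.antipode (R := k)))) at key
  simp only [map_sum, LinearMap.comp_apply, TensorProduct.map_tmul, LinearEquiv.coe_coe,
    TensorProduct.comm_tmul, LinearMap.mul'_apply, TensorProduct.lid_tmul,
    AlgHom.toLinearMap_apply] at key
  rw [← (ℛ k h).eq]
  simp only [map_sum, TensorProduct.map_tmul, TensorProduct.comm_tmul, LinearMap.mul'_apply,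
    LinearMap.comp_apply]
  have hT : ∀ i, twistedAntipode k H δ ((ℛ k h).left i) =
      ∑ j ∈ (ℛ k ((ℛ k h).left i)).index,
        δ ((ℛ k ((ℛ k h).left i)).left j) • HopfAlgebra.antipode (R := k)
          ((ℛ k ((ℛ k h).left i)).right j) := by
    intro i
    simp only [twistedAntipode, LinearMap.comp_apply, ← (ℛ k ((ℛ k h).left i)).eq, map_sum,
      TensorProduct.map_tmul, TensorProduct.lid_tmul, LinearEquiv.coe_coe,
      AlgHom.toLinearMap_apply]
  calc ∑ i ∈ (ℛ k h).index,
        HopfAlgebra.antipode (R := k) (HopfAlgebra.antipode (R := k) ((ℛ k h).right i)) *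
          twistedAntipode k H δ ((ℛ k h).left i)
      = ∑ i ∈ (ℛ k h).index, ∑ j ∈ (ℛ k ((ℛ k h).left i)).index,
          δ ((ℛ k ((ℛ k h).left i)).left j) •
            (HopfAlgebra.antipode (R := k) (HopfAlgebra.antipode (R := k) ((ℛ k h).right i)) *
              HopfAlgebra.antipode (R := k) ((ℛ k ((ℛ k h).left i)).right j)) := by
        refine Finset.sum_congr rfl fun i _ => ?_
        rw [hT i, Finset.mul_sum]
        exact Finset.sum_congr rfl fun j _ => mul_smul_comm _ _ _
    _ = ∑ i ∈ (ℛ k h).index, ∑ j ∈ (ℛ k ((ℛ k h).right i)).index,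
          δ ((ℛ k h).left i) •
            (HopfAlgebra.antipode (R := k)
                (HopfAlgebra.antipode (R := k) ((ℛ k ((ℛ k h).right i)).right j)) *
              HopfAlgebra.antipode (R := k) ((ℛ k ((ℛ k h).right i)).left j)) := key
    _ = ∑ i ∈ (ℛ k h).index,
          δ ((ℛ k h).left i) • (Coalgebra.counit (R := k) ((ℛ k h).right i) • (1 : H)) := by
        refine Finset.sum_congr rfl fun i _ => ?_
        rw [← Finset.smul_sum, sum_antipode_sq_mul _ (ℛ k ((ℛ k h).right i))]
    _ = ∑ i ∈ (ℛ k h).index,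
          (δ ((ℛ k h).left i) * Coalgebra.counit (R := k) ((ℛ k h).right i)) • (1 : H) := by
        simp [smul_smul]
    _ = δ h • (1 : H) := by
        rw [← Finset.sum_smul]
        congr 1
        have hδ := congrArg δ (sum_smul_counit h (ℛ k h))
        simp only [map_sum, map_smul, smul_eq_mul] at hδ
        rw [← hδ]
        exact Finset.sum_congr rfl fun i _ => mul_comm _ _
end

section
/- If the modular pair (δ,σ) is in involution, i.e. (σ⁻¹ S̃)² = I, then the cyclic operator τ₂ on H ⊗ H satisfies τ₂³ = identity. -/
open scoped TensorProduct

/-- The cyclic operator `τ₂` on `H ⊗ H`: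
`τ₂(h¹ ⊗ h²) = (Δ S̃(h¹)) · (h² ⊗ σ)`, where `·` is the componentwise
multiplication of `H ⊗ H`. -/
noncomputable def tau2 (k H : Type) [Field k] [Ring H] [HopfAlgebra k H]
    (δ : H →ₐ[k] k) (σ : H) : H ⊗[k] H →ₗ[k] H ⊗[k] H :=
  LinearMap.mul' k (H ⊗[k] H)
    ∘ₗ TensorProduct.map (Coalgebra.comul ∘ₗ twistedAntipode k H δ)
        ((TensorProduct.mk k H H).flip σ)

namespace Tau2Aux

open Coalgebra TensorProduct LinearMap HopfAlgebra

variable {k : Type} [Field k]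

section Conv

variable {C A : Type} [AddCommGroup C] [Module k C] [Coalgebra k C]
  [Ring A] [Algebra k A]

noncomputable def conv (f g : C →ₗ[k] A) : C →ₗ[k] A :=
  LinearMap.mul' k A ∘ₗ TensorProduct.map f g ∘ₗ Coalgebra.comul

noncomputable def convUnit : C →ₗ[k] A := Algebra.linearMap k A ∘ₗ Coalgebra.counit

lemma conv_repr (f g : C →ₗ[k] A) {a : C} {ι : Type} (r : Repr k a ι) :
    conv f g a = ∑ i ∈ r.index, f (r.left i) * g (r.right i) := by
  simp only [conv, LinearMap.comp_apply, ← r.eq, map_sum, TensorProduct.map_tmul,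
    LinearMap.mul'_apply]

lemma sum_counit_smul {a : C} {ι : Type} (r : Repr k a ι) :
    ∑ i ∈ r.index, counit (R := k) (r.left i) • r.right i = a := by
  have h := congrArg (TensorProduct.lid k C) (sum_counit_tmul_eq r)
  rw [map_sum] at h
  simpa only [_root_.TensorProduct.lid_tmul, one_smul] using h

lemma sum_smul_counit {a : C} {ι : Type} (r : Repr k a ι) :
    ∑ i ∈ r.index, counit (R := k) (r.right i) • r.left i = a := by
  have h := congrArg (TensorProduct.rid k C) (sum_tmul_counit_eq r)
  rw [map_sum] at h
  simpa only [_root_.TensorProduct.rid_tmul, one_smul] using h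

lemma convUnit_apply (a : C) : (convUnit : C →ₗ[k] A) a = algebraMap k A (counit a) := rfl

lemma conv_unit_left (f : C →ₗ[k] A) : conv convUnit f = f := by
  ext a
  rw [conv_repr _ _ (ℛ k a)]
  have : ∀ i ∈ (ℛ k a).index, (convUnit (k:=k) (C:=C) (A:=A)) ((ℛ k a).left i) * f ((ℛ k a).right i)
      = f (counit (R := k) ((ℛ k a).left i) • (ℛ k a).right i) := by
    intro i _
    rw [convUnit_apply, map_smul, ← Algebra.smul_def]
  rw [Finset.sum_congr rfl this, ← map_sum, sum_counit_smul (ℛ k a)]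

lemma conv_unit_right (f : C →ₗ[k] A) : conv f convUnit = f := by
  ext a
  rw [conv_repr _ _ (ℛ k a)]
  have : ∀ i ∈ (ℛ k a).index, f ((ℛ k a).left i) * (convUnit (k:=k) (C:=C) (A:=A)) ((ℛ k a).right i)
      = f (counit (R := k) ((ℛ k a).right i) • (ℛ k a).left i) := by
    intro i _
    rw [convUnit_apply, map_smul, ← Algebra.commutes, ← Algebra.smul_def]
  rw [Finset.sum_congr rfl this, ← map_sum, sum_smul_counit (ℛ k a)]

lemma conv_assoc (f g h : C →ₗ[k] A) : conv (conv f g) h = conv f (conv g h) := by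
  ext a
  have key := sum_map_tmul_tmul_eq (R := k) f g h a (repr := ℛ k a)
    (a₁ := fun i => ℛ k ((ℛ k a).left i)) (a₂ := fun i => ℛ k ((ℛ k a).right i))
  have key2 := congrArg (LinearMap.mul' k A ∘ₗ (LinearMap.mul' k A).lTensor A) key
  simp only [map_sum, LinearMap.comp_apply, LinearMap.lTensor_tmul,
    LinearMap.mul'_apply] at key2
  rw [conv_repr (conv f g) h (ℛ k a), conv_repr f (conv g h) (ℛ k a)]
  calc ∑ i ∈ (ℛ k a).index, conv f g ((ℛ k a).left i) * h ((ℛ k a).right i)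
      = ∑ i ∈ (ℛ k a).index, ∑ j ∈ (ℛ k ((ℛ k a).left i)).index,
          f ((ℛ k ((ℛ k a).left i)).left j) *
            (g ((ℛ k ((ℛ k a).left i)).right j) * h ((ℛ k a).right i)) := by
        refine Finset.sum_congr rfl fun i _ => ?_
        rw [conv_repr f g (ℛ k ((ℛ k a).left i)), Finset.sum_mul]
        exact Finset.sum_congr rfl fun j _ => (mul_assoc _ _ _)
    _ = ∑ i ∈ (ℛ k a).index, ∑ j ∈ (ℛ k ((ℛ k a).right i)).index,
          f ((ℛ k a).left i) *
            (g ((ℛ k ((ℛ k a).right i)).left j) * h ((ℛ k ((ℛ k a).right i)).right j)) :=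
        key2.symm
    _ = ∑ i ∈ (ℛ k a).index, f ((ℛ k a).left i) * conv g h ((ℛ k a).right i) := by
        refine Finset.sum_congr rfl fun i _ => ?_
        rw [conv_repr g h (ℛ k ((ℛ k a).right i)), Finset.mul_sum]

lemma conv_eq {f g h : C →ₗ[k] A} (h1 : conv f g = convUnit) (h2 : conv g h = convUnit) :
    f = h := by
  have : conv f (conv g h) = conv (conv f g) h := (conv_assoc f g h).symm
  rw [h1, h2, conv_unit_right, conv_unit_left] at this
  exact this

end Conv
variable {k : Type} [Field k] {H : Type} [Ring H] [HopfAlgebra k H]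

lemma comul_tmul (a b : H) :
    Coalgebra.comul (R := k) (a ⊗ₜ[k] b) =
      TensorProduct.tensorTensorTensorComm k H H H H
        (Coalgebra.comul (R := k) a ⊗ₜ[k] Coalgebra.comul (R := k) b) := rfl

lemma counit_tmul (a b : H) :
    Coalgebra.counit (R := k) (a ⊗ₜ[k] b) =
      Coalgebra.counit (R := k) a * Coalgebra.counit (R := k) b := by
  show Coalgebra.counit (R := k) b • Coalgebra.counit (R := k) a = _
  rw [smul_eq_mul, mul_comm]

/-- A representation of `comul (a ⊗ₜ b)` built from ones for `a` and `b`. -/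
noncomputable def tmulRepr {a b : H} {ι κ : Type} (r : Repr k a ι) (s : Repr k b κ) :
    Repr k (a ⊗ₜ[k] b) (ι × κ) where
  index := r.index ×ˢ s.index
  left p := r.left p.1 ⊗ₜ[k] s.left p.2
  right p := r.right p.1 ⊗ₜ[k] s.right p.2
  eq := by
    rw [comul_tmul, ← r.eq, ← s.eq, TensorProduct.sum_tmul]
    simp only [TensorProduct.tmul_sum, map_sum,
      TensorProduct.tensorTensorTensorComm_tmul]
    rw [Finset.sum_product]

/-- A representation of `comul (a * b)` built from ones for `a` and `b`. -/
noncomputable def mulRepr {a b : H} {ι κ : Type} (r : Repr k a ι) (s : Repr k b κ) :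
    Repr k (a * b) (ι × κ) where
  index := r.index ×ˢ s.index
  left p := r.left p.1 * s.left p.2
  right p := r.right p.1 * s.right p.2
  eq := by
    rw [Bialgebra.comul_mul, ← r.eq, ← s.eq, Finset.sum_mul_sum]
    simp only [Algebra.TensorProduct.tmul_mul_tmul]
    rw [Finset.sum_product]

lemma antipode_one : antipode (R := k) (1 : H) = 1 := by
  have h := mul_antipode_rTensor_comul_apply (R := k) (a := (1 : H))
  simpa [Bialgebra.comul_one, Algebra.TensorProduct.one_def] using h

section AntipodeMul

lemma conv_antipode_mul :
    conv (antipode (R := k) ∘ₗ LinearMap.mul' k H) (LinearMap.mul' k H) =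
      (convUnit : H ⊗[k] H →ₗ[k] H) := by
  apply TensorProduct.ext'
  intro a b
  rw [conv_repr _ _ (tmulRepr (ℛ k a) (ℛ k b)), convUnit_apply]
  have key := sum_antipode_mul_eq_algebraMap_counit (R := k) (mulRepr (ℛ k a) (ℛ k b))
  simp only [mulRepr, tmulRepr, LinearMap.comp_apply, LinearMap.mul'_apply] at key ⊢
  rw [key, counit_tmul, Bialgebra.counit_mul]

lemma conv_mul_antipode_swap :
    conv (LinearMap.mul' k H)
      (LinearMap.mul' k H ∘ₗ TensorProduct.map (antipode (R := k)) (antipode (R := k))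
        ∘ₗ (TensorProduct.comm k H H).toLinearMap) =
      (convUnit : H ⊗[k] H →ₗ[k] H) := by
  apply TensorProduct.ext'
  intro a b
  rw [conv_repr _ _ (tmulRepr (ℛ k a) (ℛ k b)), convUnit_apply]
  simp only [tmulRepr, LinearMap.comp_apply, LinearMap.mul'_apply, LinearEquiv.coe_coe,
    TensorProduct.comm_tmul, TensorProduct.map_tmul]
  rw [Finset.sum_product]
  have inner : ∀ i ∈ (ℛ k a).index,
      ∑ j ∈ (ℛ k b).index,
        (ℛ k a).left i * (ℛ k b).left j *
          (antipode (R := k) ((ℛ k b).right j) * antipode (R := k) ((ℛ k a).right i)) =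
      Coalgebra.counit (R := k) b •
        ((ℛ k a).left i * antipode (R := k) ((ℛ k a).right i)) := by
    intro i _
    calc ∑ j ∈ (ℛ k b).index,
        (ℛ k a).left i * (ℛ k b).left j *
          (antipode (R := k) ((ℛ k b).right j) * antipode (R := k) ((ℛ k a).right i))
        = (ℛ k a).left i *
            (∑ j ∈ (ℛ k b).index, (ℛ k b).left j * antipode (R := k) ((ℛ k b).right j)) *
            antipode (R := k) ((ℛ k a).right i) := by
          rw [Finset.mul_sum, Finset.sum_mul]
          exact Finset.sum_congr rfl fun j _ => by simp only [mul_assoc]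
      _ = Coalgebra.counit (R := k) b •
            ((ℛ k a).left i * antipode (R := k) ((ℛ k a).right i)) := by
          rw [sum_mul_antipode_eq_algebraMap_counit (R := k) (ℛ k b), ← Algebra.commutes, mul_assoc,
            ← Algebra.smul_def]
  rw [Finset.sum_congr rfl inner, ← Finset.smul_sum, sum_mul_antipode_eq_algebraMap_counit (R := k) (ℛ k a),
    counit_tmul, Algebra.smul_def, ← map_mul, mul_comm]

lemma antipode_mul (a b : H) :
    antipode (R := k) (a * b) = antipode (R := k) b * antipode (R := k) a := by
  have := conv_eq (k := k) (C := H ⊗[k] H) (A := H) conv_antipode_mul conv_mul_antipode_swap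
  have h := LinearMap.congr_fun this (a ⊗ₜ[k] b)
  simpa using h

end AntipodeMul

section ComulAntipode

/-- Key 3-fold Sweedler computation: `Σ S(w₁) ⊗ S c · Δ(w₂) = 1 ⊗ S(c)·w`. -/
lemma lemK (c w : H) {ι : Type} (s : Repr k w ι) :
    ∑ j ∈ s.index,
      (antipode (R := k) (s.left j) ⊗ₜ[k] antipode (R := k) c) *
        Coalgebra.comul (R := k) (s.right j)
      = (1 : H) ⊗ₜ[k] (antipode (R := k) c * w) := by
  set Sc := antipode (R := k) c with hSc
  set Ξ : H ⊗[k] (H ⊗[k] H) →ₗ[k] H ⊗[k] H :=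
    TensorProduct.lift (LinearMap.mul k (H ⊗[k] H) ∘ₗ
      ((TensorProduct.mk k H H).flip Sc ∘ₗ antipode (R := k))) with hΞ
  have ΞtL : ∀ x y z : H, Ξ (x ⊗ₜ (y ⊗ₜ z)) =
      (antipode (R := k) x * y) ⊗ₜ[k] (Sc * z) := by
    intro x y z
    simp only [hΞ, TensorProduct.lift.tmul, LinearMap.comp_apply, LinearMap.mul_apply',
      LinearMap.flip_apply, TensorProduct.mk_apply, Algebra.TensorProduct.tmul_mul_tmul]
  have key := sum_tmul_tmul_eq (R := k) s (fun j => ℛ k (s.left j)) (fun j => ℛ k (s.right j))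
  have key2 := congrArg Ξ key
  simp only [map_sum] at key2
  calc ∑ j ∈ s.index, (antipode (R := k) (s.left j) ⊗ₜ[k] Sc) *
        Coalgebra.comul (R := k) (s.right j)
      = ∑ j ∈ s.index, ∑ m ∈ (ℛ k (s.right j)).index,
          Ξ (s.left j ⊗ₜ ((ℛ k (s.right j)).left m ⊗ₜ (ℛ k (s.right j)).right m)) := by
        refine Finset.sum_congr rfl fun j _ => ?_
        rw [← (ℛ k (s.right j)).eq, Finset.mul_sum]
        exact Finset.sum_congr rfl fun m _ => by
          rw [ΞtL, Algebra.TensorProduct.tmul_mul_tmul]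
    _ = ∑ j ∈ s.index, ∑ m ∈ (ℛ k (s.left j)).index,
          Ξ ((ℛ k (s.left j)).left m ⊗ₜ ((ℛ k (s.left j)).right m ⊗ₜ s.right j)) := key2.symm
    _ = ∑ j ∈ s.index, Coalgebra.counit (R := k) (s.left j) •
          ((1 : H) ⊗ₜ[k] (Sc * s.right j)) := by
        refine Finset.sum_congr rfl fun j _ => ?_
        have : ∀ m ∈ (ℛ k (s.left j)).index,
            Ξ ((ℛ k (s.left j)).left m ⊗ₜ ((ℛ k (s.left j)).right m ⊗ₜ s.right j)) =
            (antipode (R := k) ((ℛ k (s.left j)).left m) * (ℛ k (s.left j)).right m)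
              ⊗ₜ[k] (Sc * s.right j) := fun m _ => ΞtL _ _ _
        rw [Finset.sum_congr rfl this, ← TensorProduct.sum_tmul,
          sum_antipode_mul_eq_algebraMap_counit (R := k) (ℛ k (s.left j)), Algebra.algebraMap_eq_smul_one,
          TensorProduct.smul_tmul']
    _ = (1 : H) ⊗ₜ[k] (Sc * w) := by
        simp only [← TensorProduct.tmul_smul, ← mul_smul_comm, ← TensorProduct.tmul_sum,
          ← Finset.mul_sum]
        rw [sum_counit_smul s]

lemma conv_comul_comul_antipode :
    conv (Coalgebra.comul)
      (Coalgebra.comul ∘ₗ antipode (R := k) : H →ₗ[k] H ⊗[k] H) = convUnit := by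
  ext a
  rw [conv_repr _ _ (ℛ k a), convUnit_apply]
  have step : ∀ i ∈ (ℛ k a).index,
      Coalgebra.comul (R := k) ((ℛ k a).left i) *
        (Coalgebra.comul ∘ₗ antipode (R := k)) ((ℛ k a).right i) =
      Coalgebra.comul (R := k) ((ℛ k a).left i * antipode (R := k) ((ℛ k a).right i)) :=
    fun i _ => by rw [Bialgebra.comul_mul]; rfl
  rw [Finset.sum_congr rfl step, ← map_sum, sum_mul_antipode_eq_algebraMap_counit (R := k) (ℛ k a),
    Algebra.algebraMap_eq_smul_one, map_smul, Bialgebra.comul_one,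
    ← Algebra.algebraMap_eq_smul_one]

lemma conv_antipode_swap_comul :
    conv ((TensorProduct.comm k H H).toLinearMap ∘ₗ
        TensorProduct.map (antipode (R := k)) (antipode (R := k)) ∘ₗ Coalgebra.comul)
      (Coalgebra.comul) = (convUnit : H →ₗ[k] H ⊗[k] H) := by
  ext a
  rw [conv_repr _ _ (ℛ k a), convUnit_apply]
  set Ξ : H ⊗[k] (H ⊗[k] H) →ₗ[k] H ⊗[k] H :=
    LinearMap.mul' k (H ⊗[k] H) ∘ₗ
      TensorProduct.map ((TensorProduct.comm k H H).toLinearMap ∘ₗ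
        TensorProduct.map (antipode (R := k)) (antipode (R := k))) (Coalgebra.comul) ∘ₗ
      (TensorProduct.assoc k H H H).symm.toLinearMap with hΞ
  have ΞtL : ∀ x y z : H, Ξ (x ⊗ₜ (y ⊗ₜ z)) =
      (antipode (R := k) y ⊗ₜ[k] antipode (R := k) x) * Coalgebra.comul (R := k) z := by
    intro x y z
    simp only [hΞ, LinearMap.comp_apply, LinearEquiv.coe_coe, TensorProduct.assoc_symm_tmul,
      TensorProduct.map_tmul, TensorProduct.comm_tmul, LinearMap.mul'_apply]
  have key := sum_tmul_tmul_eq (R := k) (ℛ k a)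
    (fun i => ℛ k ((ℛ k a).left i)) (fun i => ℛ k ((ℛ k a).right i))
  have key2 := congrArg Ξ key
  simp only [map_sum] at key2
  calc ∑ i ∈ (ℛ k a).index,
        ((TensorProduct.comm k H H).toLinearMap ∘ₗ
          TensorProduct.map (antipode (R := k)) (antipode (R := k)) ∘ₗ Coalgebra.comul)
            ((ℛ k a).left i) * Coalgebra.comul (R := k) ((ℛ k a).right i)
      = ∑ i ∈ (ℛ k a).index, ∑ j ∈ (ℛ k ((ℛ k a).left i)).index,
          Ξ ((ℛ k ((ℛ k a).left i)).left j ⊗ₜ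
            ((ℛ k ((ℛ k a).left i)).right j ⊗ₜ (ℛ k a).right i)) := by
        refine Finset.sum_congr rfl fun i _ => ?_
        rw [LinearMap.comp_apply, LinearMap.comp_apply, ← (ℛ k ((ℛ k a).left i)).eq]
        simp only [map_sum, TensorProduct.map_tmul, LinearEquiv.coe_coe,
          TensorProduct.comm_tmul, Finset.sum_mul]
        exact Finset.sum_congr rfl fun j _ => (ΞtL _ _ _).symm
    _ = ∑ i ∈ (ℛ k a).index, ∑ j ∈ (ℛ k ((ℛ k a).right i)).index,
          Ξ ((ℛ k a).left i ⊗ₜ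
            ((ℛ k ((ℛ k a).right i)).left j ⊗ₜ (ℛ k ((ℛ k a).right i)).right j)) := key2
    _ = ∑ i ∈ (ℛ k a).index,
          (1 : H) ⊗ₜ[k] (antipode (R := k) ((ℛ k a).left i) * (ℛ k a).right i) := by
        refine Finset.sum_congr rfl fun i _ => ?_
        have : ∀ j ∈ (ℛ k ((ℛ k a).right i)).index,
            Ξ ((ℛ k a).left i ⊗ₜ
              ((ℛ k ((ℛ k a).right i)).left j ⊗ₜ (ℛ k ((ℛ k a).right i)).right j)) =
            (antipode (R := k) ((ℛ k ((ℛ k a).right i)).left j) ⊗ₜ[k]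
              antipode (R := k) ((ℛ k a).left i)) *
              Coalgebra.comul (R := k) ((ℛ k ((ℛ k a).right i)).right j) := by
          intro j _
          rw [ΞtL]
        rw [Finset.sum_congr rfl this]
        exact lemK _ _ _
    _ = algebraMap k (H ⊗[k] H) (Coalgebra.counit (R := k) a) := by
        rw [← TensorProduct.tmul_sum, sum_antipode_mul_eq_algebraMap_counit (R := k) (ℛ k a),
          Algebra.algebraMap_eq_smul_one, TensorProduct.tmul_smul,
          ← Algebra.TensorProduct.one_def, ← Algebra.algebraMap_eq_smul_one]

lemma comul_antipode (a : H) :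
    Coalgebra.comul (R := k) (antipode (R := k) a) =
      (TensorProduct.comm k H H) (TensorProduct.map (antipode (R := k)) (antipode (R := k))
        (Coalgebra.comul (R := k) a)) := by
  have h := conv_eq (k := k) (C := H) (A := H ⊗[k] H)
    conv_antipode_swap_comul conv_comul_comul_antipode
  have := LinearMap.congr_fun h.symm a
  simpa using this

end ComulAntipode

section Twisted

variable (δ : H →ₐ[k] k)

lemma twistedAntipode_repr {a : H} {ι : Type} (r : Repr k a ι) :
    twistedAntipode k H δ a =
      ∑ i ∈ r.index, δ (r.left i) • antipode (R := k) (r.right i) := by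
  simp only [twistedAntipode, LinearMap.comp_apply, ← r.eq, map_sum, TensorProduct.map_tmul,
    LinearEquiv.coe_coe, _root_.TensorProduct.lid_tmul, AlgHom.toLinearMap_apply]

lemma twistedAntipode_one : twistedAntipode k H δ (1 : H) = 1 := by
  simp only [twistedAntipode, LinearMap.comp_apply, Bialgebra.comul_one,
    Algebra.TensorProduct.one_def, TensorProduct.map_tmul, LinearEquiv.coe_coe,
    _root_.TensorProduct.lid_tmul, AlgHom.toLinearMap_apply, map_one, antipode_one, one_smul]

lemma twistedAntipode_mul (a b : H) :
    twistedAntipode k H δ (a * b) = twistedAntipode k H δ b * twistedAntipode k H δ a := by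
  rw [twistedAntipode_repr δ (mulRepr (ℛ k a) (ℛ k b)), twistedAntipode_repr δ (ℛ k b),
    twistedAntipode_repr δ (ℛ k a), Finset.sum_mul_sum]
  show ∑ p ∈ (ℛ k a).index ×ˢ (ℛ k b).index, _ = _
  rw [Finset.sum_product]
  rw [Finset.sum_comm]
  refine Finset.sum_congr rfl fun j _ => Finset.sum_congr rfl fun i _ => ?_
  simp only [mulRepr]
  rw [map_mul, antipode_mul, smul_mul_assoc, mul_smul_comm, smul_smul, mul_comm (δ _) (δ _)]

lemma comul_twistedAntipode {a : H} {ι : Type} (r : Repr k a ι) :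
    Coalgebra.comul (R := k) (twistedAntipode k H δ a) =
      ∑ i ∈ r.index, antipode (R := k) (r.right i) ⊗ₜ[k] twistedAntipode k H δ (r.left i) := by
  set Θ : H ⊗[k] (H ⊗[k] H) →ₗ[k] H ⊗[k] H :=
    (TensorProduct.lid k (H ⊗[k] H)).toLinearMap ∘ₗ
      TensorProduct.map δ.toLinearMap ((TensorProduct.comm k H H).toLinearMap ∘ₗ
        TensorProduct.map (antipode (R := k)) (antipode (R := k))) with hΘ
  have ΘtL : ∀ x y z : H, Θ (x ⊗ₜ (y ⊗ₜ z)) =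
      δ x • (antipode (R := k) z ⊗ₜ[k] antipode (R := k) y) := by
    intro x y z
    simp only [hΘ, LinearMap.comp_apply, TensorProduct.map_tmul, LinearEquiv.coe_coe,
      TensorProduct.comm_tmul, _root_.TensorProduct.lid_tmul, AlgHom.toLinearMap_apply]
  have key := sum_tmul_tmul_eq (R := k) r
    (fun i => ℛ k (r.left i)) (fun i => ℛ k (r.right i))
  have key2 := congrArg Θ key
  simp only [map_sum] at key2
  calc Coalgebra.comul (R := k) (twistedAntipode k H δ a)
      = ∑ i ∈ r.index, δ (r.left i) •
          Coalgebra.comul (R := k) (antipode (R := k) (r.right i)) := by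
        rw [twistedAntipode_repr δ r, map_sum]
        exact Finset.sum_congr rfl fun i _ => map_smul _ _ _
    _ = ∑ i ∈ r.index, ∑ j ∈ (ℛ k (r.right i)).index,
          Θ (r.left i ⊗ₜ ((ℛ k (r.right i)).left j ⊗ₜ (ℛ k (r.right i)).right j)) := by
        refine Finset.sum_congr rfl fun i _ => ?_
        rw [comul_antipode, ← (ℛ k (r.right i)).eq]
        simp only [map_sum, TensorProduct.map_tmul, TensorProduct.comm_tmul, Finset.smul_sum]
        exact Finset.sum_congr rfl fun j _ => (ΘtL _ _ _).symm
    _ = ∑ i ∈ r.index, ∑ j ∈ (ℛ k (r.left i)).index,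
          Θ ((ℛ k (r.left i)).left j ⊗ₜ ((ℛ k (r.left i)).right j ⊗ₜ r.right i)) := key2.symm
    _ = ∑ i ∈ r.index, antipode (R := k) (r.right i) ⊗ₜ[k] twistedAntipode k H δ (r.left i) := by
        refine Finset.sum_congr rfl fun i _ => ?_
        have : ∀ j ∈ (ℛ k (r.left i)).index,
            Θ ((ℛ k (r.left i)).left j ⊗ₜ ((ℛ k (r.left i)).right j ⊗ₜ r.right i)) =
            antipode (R := k) (r.right i) ⊗ₜ[k]
              (δ ((ℛ k (r.left i)).left j) • antipode (R := k) ((ℛ k (r.left i)).right j)) := by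
          intro j _
          rw [ΘtL, TensorProduct.tmul_smul]
        rw [Finset.sum_congr rfl this, ← TensorProduct.tmul_sum,
          ← twistedAntipode_repr δ (ℛ k (r.left i))]

/-- A representation of `comul (S̃ a)` built from one for `a`. -/
noncomputable def twistedRepr {a : H} {ι : Type} (r : Repr k a ι) :
    Repr k (twistedAntipode k H δ a) ι where
  index := r.index
  left i := antipode (R := k) (r.right i)
  right i := twistedAntipode k H δ (r.left i)
  eq := (comul_twistedAntipode δ r).symm

/-- Key collapse: `Σ Δ(S̃(w₁)) · (w₂ ⊗ 1) = 1 ⊗ S̃ w`. -/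
lemma psi_comul {w : H} {ι : Type} (r : Repr k w ι) :
    ∑ i ∈ r.index, Coalgebra.comul (R := k) (twistedAntipode k H δ (r.left i)) *
      ((r.right i) ⊗ₜ[k] (1 : H)) = (1 : H) ⊗ₜ[k] twistedAntipode k H δ w := by
  set Λ : H ⊗[k] (H ⊗[k] H) →ₗ[k] H ⊗[k] H :=
    (TensorProduct.comm k H H).toLinearMap ∘ₗ
      TensorProduct.map (twistedAntipode k H δ)
        (LinearMap.mul' k H ∘ₗ TensorProduct.map (antipode (R := k)) LinearMap.id) with hΛ
  have ΛtL : ∀ x y z : H, Λ (x ⊗ₜ (y ⊗ₜ z)) =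
      (antipode (R := k) y * z) ⊗ₜ[k] twistedAntipode k H δ x := by
    intro x y z
    simp only [hΛ, LinearMap.comp_apply, TensorProduct.map_tmul, LinearEquiv.coe_coe,
      TensorProduct.comm_tmul, LinearMap.mul'_apply, LinearMap.id_coe, id_eq]
  have key := sum_tmul_tmul_eq (R := k) r
    (fun i => ℛ k (r.left i)) (fun i => ℛ k (r.right i))
  have key2 := congrArg Λ key
  simp only [map_sum] at key2
  calc ∑ i ∈ r.index, Coalgebra.comul (R := k) (twistedAntipode k H δ (r.left i)) *
        ((r.right i) ⊗ₜ[k] (1 : H))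
      = ∑ i ∈ r.index, ∑ j ∈ (ℛ k (r.left i)).index,
          Λ ((ℛ k (r.left i)).left j ⊗ₜ ((ℛ k (r.left i)).right j ⊗ₜ r.right i)) := by
        refine Finset.sum_congr rfl fun i _ => ?_
        rw [comul_twistedAntipode δ (ℛ k (r.left i)), Finset.sum_mul]
        refine Finset.sum_congr rfl fun j _ => ?_
        rw [ΛtL, Algebra.TensorProduct.tmul_mul_tmul, mul_one]
    _ = ∑ i ∈ r.index, ∑ j ∈ (ℛ k (r.right i)).index,
          Λ (r.left i ⊗ₜ ((ℛ k (r.right i)).left j ⊗ₜ (ℛ k (r.right i)).right j)) := key2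
    _ = ∑ i ∈ r.index, Coalgebra.counit (R := k) (r.right i) •
          ((1 : H) ⊗ₜ[k] twistedAntipode k H δ (r.left i)) := by
        refine Finset.sum_congr rfl fun i _ => ?_
        have : ∀ j ∈ (ℛ k (r.right i)).index,
            Λ (r.left i ⊗ₜ ((ℛ k (r.right i)).left j ⊗ₜ (ℛ k (r.right i)).right j)) =
            (antipode (R := k) ((ℛ k (r.right i)).left j) * (ℛ k (r.right i)).right j)
              ⊗ₜ[k] twistedAntipode k H δ (r.left i) := fun j _ => ΛtL _ _ _
        rw [Finset.sum_congr rfl this, ← TensorProduct.sum_tmul,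
          sum_antipode_mul_eq_algebraMap_counit (R := k) (ℛ k (r.right i)), Algebra.algebraMap_eq_smul_one,
          TensorProduct.smul_tmul']
    _ = (1 : H) ⊗ₜ[k] twistedAntipode k H δ w := by
        simp only [← TensorProduct.tmul_smul, ← TensorProduct.tmul_sum, ← map_smul, ← map_sum]
        rw [sum_smul_counit r]

end Twisted

theorem tau2_cube_eq_id' (k H : Type) [Field k] [Ring H] [HopfAlgebra k H]
    (δ : H →ₐ[k] k) (σ σ' : H)
    (hgrouplike : Coalgebra.comul (R := k) σ = σ ⊗ₜ[k] σ)
    (hcounit : Coalgebra.counit (R := k) σ = 1)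
    (hinv : σ * σ' = 1) (hinv' : σ' * σ = 1)
    (hmodular : δ σ = 1)
    (hinvolution : ∀ h : H, σ' * twistedAntipode k H δ (σ' * twistedAntipode k H δ h) = h) :
    ∀ x : H ⊗[k] H, tau2 k H δ σ (tau2 k H δ σ (tau2 k H δ σ x)) = x := by
  have hεσ' : Coalgebra.counit (R := k) σ' = 1 := by
    have h1 : Coalgebra.counit (R := k) (σ * σ') = 1 := by
      rw [hinv, Bialgebra.counit_one]
    rw [Bialgebra.counit_mul, hcounit, one_mul] at h1
    exact h1
  have hδσ' : δ σ' = 1 := by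
    have h1 := map_mul δ σ σ'
    rw [hinv, map_one, hmodular, one_mul] at h1
    exact h1.symm
  have hSσ : antipode (R := k) σ = σ' := by
    have h1 := mul_antipode_rTensor_comul_apply (R := k) (a := σ)
    rw [hgrouplike, hcounit] at h1
    simp only [LinearMap.rTensor_tmul, LinearMap.mul'_apply, map_one] at h1
    calc antipode (R := k) σ = antipode (R := k) σ * (σ * σ') := by rw [hinv, mul_one]
      _ = (antipode (R := k) σ * σ) * σ' := (mul_assoc _ _ _).symm
      _ = σ' := by rw [h1, one_mul]
  have hcomulσ' : Coalgebra.comul (R := k) σ' = σ' ⊗ₜ[k] σ' := by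
    refine (left_inv_eq_right_inv (a := Coalgebra.comul (R := k) σ) ?_ ?_).symm
    · rw [hgrouplike, Algebra.TensorProduct.tmul_mul_tmul, hinv',
        Algebra.TensorProduct.one_def]
    · rw [← Bialgebra.comul_mul, hinv, Bialgebra.comul_one]
  have hSσ' : antipode (R := k) σ' = σ := by
    have h1 := mul_antipode_rTensor_comul_apply (R := k) (a := σ')
    rw [hcomulσ', hεσ'] at h1
    simp only [LinearMap.rTensor_tmul, LinearMap.mul'_apply, map_one] at h1
    calc antipode (R := k) σ' = antipode (R := k) σ' * (σ' * σ) := by rw [hinv', mul_one]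
      _ = (antipode (R := k) σ' * σ') * σ := (mul_assoc _ _ _).symm
      _ = σ := by rw [h1, one_mul]
  have hAσ : twistedAntipode k H δ σ = σ' := by
    rw [twistedAntipode, LinearMap.comp_apply, LinearMap.comp_apply, hgrouplike]
    simp only [TensorProduct.map_tmul, LinearEquiv.coe_coe, _root_.TensorProduct.lid_tmul,
      AlgHom.toLinearMap_apply, hmodular, hSσ, one_smul]
  have hAσ' : twistedAntipode k H δ σ' = σ := by
    rw [twistedAntipode, LinearMap.comp_apply, LinearMap.comp_apply, hcomulσ']
    simp only [TensorProduct.map_tmul, LinearEquiv.coe_coe, _root_.TensorProduct.lid_tmul,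
      AlgHom.toLinearMap_apply, hδσ', hSσ', one_smul]
  have hA2 : ∀ h : H,
      σ' * (twistedAntipode k H δ (twistedAntipode k H δ h) * σ) = h := by
    intro h
    have h1 := hinvolution h
    rw [twistedAntipode_mul δ σ' (twistedAntipode k H δ h), hAσ'] at h1
    exact h1
  have tau2_tmul : ∀ x y : H, tau2 k H δ σ (x ⊗ₜ[k] y) =
      Coalgebra.comul (R := k) (twistedAntipode k H δ x) * (y ⊗ₜ[k] σ) := by
    intro x y
    simp only [tau2, LinearMap.comp_apply, TensorProduct.map_tmul, LinearMap.flip_apply,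
      TensorProduct.mk_apply, LinearMap.mul'_apply]
  have step1 : ∀ x y : H, tau2 k H δ σ (x ⊗ₜ[k] y) =
      ∑ i ∈ (ℛ k x).index,
        (antipode (R := k) ((ℛ k x).right i) * y) ⊗ₜ[k]
          (twistedAntipode k H δ ((ℛ k x).left i) * σ) := by
    intro x y
    rw [tau2_tmul, comul_twistedAntipode δ (ℛ k x), Finset.sum_mul]
    exact Finset.sum_congr rfl fun i _ => by rw [Algebra.TensorProduct.tmul_mul_tmul]
  have step2 : ∀ x y : H, tau2 k H δ σ (tau2 k H δ σ (x ⊗ₜ[k] y)) =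
      Coalgebra.comul (R := k) (twistedAntipode k H δ y) *
        (σ ⊗ₜ[k] (twistedAntipode k H δ (twistedAntipode k H δ x) * σ)) := by
    intro x y
    rw [step1, map_sum]
    have hterm : ∀ i ∈ (ℛ k x).index,
        tau2 k H δ σ ((antipode (R := k) ((ℛ k x).right i) * y) ⊗ₜ[k]
          (twistedAntipode k H δ ((ℛ k x).left i) * σ)) =
        Coalgebra.comul (R := k) (twistedAntipode k H δ y) *
          (Coalgebra.comul (R := k) (twistedAntipode k H δ (antipode (R := k) ((ℛ k x).right i))) *
            ((twistedAntipode k H δ ((ℛ k x).left i) ⊗ₜ[k] (1 : H)) * (σ ⊗ₜ[k] σ))) := by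
      intro i _
      rw [tau2_tmul, twistedAntipode_mul, Bialgebra.comul_mul]
      rw [show (twistedAntipode k H δ ((ℛ k x).left i) * σ) ⊗ₜ[k] σ =
        (twistedAntipode k H δ ((ℛ k x).left i) ⊗ₜ[k] (1 : H)) * (σ ⊗ₜ[k] σ) by
          rw [Algebra.TensorProduct.tmul_mul_tmul, one_mul]]
      rw [mul_assoc]
    rw [Finset.sum_congr rfl hterm, ← Finset.mul_sum]
    congr 1
    have collapse := psi_comul δ (twistedRepr δ (ℛ k x))
    simp only [twistedRepr] at collapse
    calc ∑ i ∈ (ℛ k x).index,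
          Coalgebra.comul (R := k) (twistedAntipode k H δ (antipode (R := k) ((ℛ k x).right i))) *
            ((twistedAntipode k H δ ((ℛ k x).left i) ⊗ₜ[k] (1 : H)) * (σ ⊗ₜ[k] σ))
        = (∑ i ∈ (ℛ k x).index,
            Coalgebra.comul (R := k) (twistedAntipode k H δ (antipode (R := k) ((ℛ k x).right i))) *
              (twistedAntipode k H δ ((ℛ k x).left i) ⊗ₜ[k] (1 : H))) * (σ ⊗ₜ[k] σ) := by
          rw [Finset.sum_mul]
          exact Finset.sum_congr rfl fun i _ => (mul_assoc _ _ _).symm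
      _ = ((1 : H) ⊗ₜ[k] twistedAntipode k H δ (twistedAntipode k H δ x)) * (σ ⊗ₜ[k] σ) := by
          rw [collapse]
      _ = σ ⊗ₜ[k] (twistedAntipode k H δ (twistedAntipode k H δ x) * σ) := by
          rw [Algebra.TensorProduct.tmul_mul_tmul, one_mul]
  intro x
  induction x using TensorProduct.induction_on with
  | zero => simp
  | add u v hu hv => rw [map_add, map_add, map_add, hu, hv]
  | tmul x y =>
    rw [step2 x y, comul_twistedAntipode δ (ℛ k y), Finset.sum_mul, map_sum]
    have hterm : ∀ j ∈ (ℛ k y).index,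
        tau2 k H δ σ ((antipode (R := k) ((ℛ k y).right j) ⊗ₜ[k]
            twistedAntipode k H δ ((ℛ k y).left j)) *
          (σ ⊗ₜ[k] (twistedAntipode k H δ (twistedAntipode k H δ x) * σ))) =
        (σ' ⊗ₜ[k] σ') *
          (Coalgebra.comul (R := k) (twistedAntipode k H δ (antipode (R := k) ((ℛ k y).right j))) *
            ((twistedAntipode k H δ ((ℛ k y).left j) ⊗ₜ[k] (1 : H)) *
              ((twistedAntipode k H δ (twistedAntipode k H δ x) * σ) ⊗ₜ[k] σ))) := by
      intro j _
      rw [Algebra.TensorProduct.tmul_mul_tmul, tau2_tmul, twistedAntipode_mul,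
        Bialgebra.comul_mul, hAσ, hcomulσ']
      rw [show (twistedAntipode k H δ ((ℛ k y).left j) *
          (twistedAntipode k H δ (twistedAntipode k H δ x) * σ)) ⊗ₜ[k] σ =
        (twistedAntipode k H δ ((ℛ k y).left j) ⊗ₜ[k] (1 : H)) *
          ((twistedAntipode k H δ (twistedAntipode k H δ x) * σ) ⊗ₜ[k] σ) by
          rw [Algebra.TensorProduct.tmul_mul_tmul, one_mul]]
      rw [mul_assoc]
    rw [Finset.sum_congr rfl hterm, ← Finset.mul_sum]
    have collapse := psi_comul δ (twistedRepr δ (ℛ k y))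
    simp only [twistedRepr] at collapse
    calc (σ' ⊗ₜ[k] σ') * ∑ j ∈ (ℛ k y).index,
          Coalgebra.comul (R := k) (twistedAntipode k H δ (antipode (R := k) ((ℛ k y).right j))) *
            ((twistedAntipode k H δ ((ℛ k y).left j) ⊗ₜ[k] (1 : H)) *
              ((twistedAntipode k H δ (twistedAntipode k H δ x) * σ) ⊗ₜ[k] σ))
        = (σ' ⊗ₜ[k] σ') * ((∑ j ∈ (ℛ k y).index,
            Coalgebra.comul (R := k) (twistedAntipode k H δ (antipode (R := k) ((ℛ k y).right j))) *
              (twistedAntipode k H δ ((ℛ k y).left j) ⊗ₜ[k] (1 : H))) *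
            ((twistedAntipode k H δ (twistedAntipode k H δ x) * σ) ⊗ₜ[k] σ)) := by
          congr 1
          rw [Finset.sum_mul]
          exact Finset.sum_congr rfl fun j _ => (mul_assoc _ _ _).symm
      _ = (σ' ⊗ₜ[k] σ') * (((1 : H) ⊗ₜ[k] twistedAntipode k H δ (twistedAntipode k H δ y)) *
            ((twistedAntipode k H δ (twistedAntipode k H δ x) * σ) ⊗ₜ[k] σ)) := by
          rw [collapse]
      _ = x ⊗ₜ[k] y := by
          rw [Algebra.TensorProduct.tmul_mul_tmul, one_mul,
            Algebra.TensorProduct.tmul_mul_tmul]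
          rw [hA2 x, hA2 y]

end Tau2Aux

/-- If the modular pair `(δ, σ)` is in involution, i.e. `σ⁻¹ S̃(σ⁻¹ S̃(h)) = h` for
all `h` (with `σ'` the inverse of the group-like element `σ`), then the cyclic
operator `τ₂` on `H ⊗ H` satisfies `τ₂³ = identity`. -/
theorem tau2_cube_eq_id (k H : Type) [Field k] [Ring H] [HopfAlgebra k H]
    (δ : H →ₐ[k] k) (σ σ' : H)
    (hgrouplike : Coalgebra.comul (R := k) σ = σ ⊗ₜ[k] σ)
    (hcounit : Coalgebra.counit (R := k) σ = 1)
    (hinv : σ * σ' = 1) (hinv' : σ' * σ = 1)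
    (hmodular : δ σ = 1)
    (hinvolution : ∀ h : H, σ' * twistedAntipode k H δ (σ' * twistedAntipode k H δ h) = h) :
    ∀ x : H ⊗[k] H, tau2 k H δ σ (tau2 k H δ σ (tau2 k H δ σ x)) = x :=
  Tau2Aux.tau2_cube_eq_id' k H δ σ σ' hgrouplike hcounit hinv hinv' hmodular hinvolution
end

section
/- Let H be a Hopf algebra with an invertible element u ∈ H such that S²(h) = u h u⁻¹ for all h ∈ H, and a central invertible element θ ∈ H with θ² = u S(u). Set σ = θ⁻¹ u and assume S(σ) = σ⁻¹. Then the map S'(h) = σ⁻¹ S(h) satisfies S'² = identity, i.e. σ⁻¹ S(σ⁻¹ S(h)) = h for all h ∈ H; hence (ε, σ) is a modular pair in involution for H. -/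
open scoped TensorProduct
open LinearMap TensorProduct Coalgebra HopfAlgebra

section Conv
variable {k : Type} [CommRing k]
variable {C : Type} [AddCommGroup C] [Module k C] [Coalgebra k C]
variable {B : Type} [Ring B] [Algebra k B]

/-- Convolution product on linear maps from a coalgebra to an algebra. -/
noncomputable def conv (f g : C →ₗ[k] B) : C →ₗ[k] B :=
  LinearMap.mul' k B ∘ₗ TensorProduct.map f g ∘ₗ Coalgebra.comul

/-- Convolution unit. -/
noncomputable def convOne : C →ₗ[k] B := Algebra.linearMap k B ∘ₗ Coalgebra.counit

lemma conv_one_left (f : C →ₗ[k] B) : conv convOne f = f := by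
  have h : (LinearMap.mul' k B ∘ₗ TensorProduct.map (convOne (k := k) (C := C) (B := B)) f) =
      (LinearMap.mul' k B ∘ₗ TensorProduct.map (Algebra.linearMap k B) f) ∘ₗ
        (Coalgebra.counit (R := k) (A := C)).rTensor C := by
    ext x y
    simp [_root_.convOne, Algebra.smul_def]
  unfold conv
  rw [← LinearMap.comp_assoc, h, LinearMap.comp_assoc, Coalgebra.rTensor_counit_comp_comul]
  ext c
  simp

lemma conv_one_right (f : C →ₗ[k] B) : conv f convOne = f := by
  have h : (LinearMap.mul' k B ∘ₗ TensorProduct.map f (convOne (k := k) (C := C) (B := B))) =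
      (LinearMap.mul' k B ∘ₗ TensorProduct.map f (Algebra.linearMap k B)) ∘ₗ
        (Coalgebra.counit (R := k) (A := C)).lTensor C := by
    ext x y
    simp [_root_.convOne, Algebra.smul_def, Algebra.commutes]
  unfold conv
  rw [← LinearMap.comp_assoc, h, LinearMap.comp_assoc, Coalgebra.lTensor_counit_comp_comul]
  ext c
  simp

lemma conv_assoc (f g h : C →ₗ[k] B) : conv (conv f g) h = conv f (conv g h) := by
  have h1 : TensorProduct.map (conv f g) h =
      TensorProduct.map (LinearMap.mul' k B ∘ₗ TensorProduct.map f g) h ∘ₗ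
        (Coalgebra.comul (R := k) (A := C)).rTensor C := by
    ext x y; simp [conv]
  have h2 : TensorProduct.map f (conv g h) =
      TensorProduct.map f (LinearMap.mul' k B ∘ₗ TensorProduct.map g h) ∘ₗ
        (Coalgebra.comul (R := k) (A := C)).lTensor C := by
    ext x y; simp [conv]
  have h3 : (LinearMap.mul' k B ∘ₗ
        TensorProduct.map (LinearMap.mul' k B ∘ₗ TensorProduct.map f g) h) ∘ₗ
        (TensorProduct.assoc k C C C).symm.toLinearMap =
      LinearMap.mul' k B ∘ₗ TensorProduct.map f (LinearMap.mul' k B ∘ₗ TensorProduct.map g h) := by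
    ext x y z
    simp [mul_assoc]
  have h4 : (Coalgebra.comul (R := k) (A := C)).rTensor C ∘ₗ Coalgebra.comul =
      (TensorProduct.assoc k C C C).symm.toLinearMap ∘ₗ
        ((Coalgebra.comul (R := k) (A := C)).lTensor C ∘ₗ Coalgebra.comul) := by
    rw [← Coalgebra.coassoc]
    ext c
    simp
  show LinearMap.mul' k B ∘ₗ TensorProduct.map (conv f g) h ∘ₗ Coalgebra.comul =
      LinearMap.mul' k B ∘ₗ TensorProduct.map f (conv g h) ∘ₗ Coalgebra.comul
  rw [h1, h2]
  simp only [LinearMap.comp_assoc]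
  rw [h4]
  simp only [← LinearMap.comp_assoc]
  rw [h3]

lemma conv_eq_of (f g h : C →ₗ[k] B) (hfg : conv f g = _root_.convOne) (hgh : conv g h = _root_.convOne) :
    f = h :=
  calc f = conv f convOne := (conv_one_right f).symm
    _ = conv f (conv g h) := by rw [hgh]
    _ = conv (conv f g) h := (conv_assoc f g h).symm
    _ = conv convOne h := by rw [hfg]
    _ = h := conv_one_left h

end Conv

section AntipodeMul
variable {k H : Type} [Field k] [Ring H] [HopfAlgebra k H]

lemma my_antipode_one : HopfAlgebra.antipode (R := k) (1 : H) = 1 := by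
  have := HopfAlgebra.mul_antipode_rTensor_comul_apply (R := k) (1 : H)
  simpa [Algebra.TensorProduct.one_def] using this

/-- The candidate anti-homomorphism `a ⊗ b ↦ S(b) S(a)`. -/
noncomputable def Gmap : H ⊗[k] H →ₗ[k] H :=
  LinearMap.mul' k H ∘ₗ
    TensorProduct.map (HopfAlgebra.antipode (R := k)) (HopfAlgebra.antipode (R := k)) ∘ₗ
    (TensorProduct.comm k H H).toLinearMap

noncomputable def Kmap : (H ⊗[k] H) ⊗[k] H →ₗ[k] H :=
  LinearMap.mul' k H ∘ₗ
    TensorProduct.map (LinearMap.mul' k H) (HopfAlgebra.antipode (R := k)) ∘ₗ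
    (TensorProduct.assoc k H H H).symm.toLinearMap ∘ₗ
    ((TensorProduct.comm k H H).toLinearMap.lTensor H) ∘ₗ
    (TensorProduct.assoc k H H H).toLinearMap

noncomputable def Pmap : H ⊗[k] H →ₗ[k] H :=
  LinearMap.mul' k H ∘ₗ (HopfAlgebra.antipode (R := k)).lTensor H

noncomputable def μmap : H ⊗[k] H →ₗ[k] H :=
  LinearMap.mul' k H ∘ₗ
    ((Algebra.linearMap k H ∘ₗ (Coalgebra.counit (R := k) (A := H))).lTensor H)

lemma claimA :
    conv (HopfAlgebra.antipode (R := k) ∘ₗ LinearMap.mul' k H) (LinearMap.mul' k H) =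
      (convOne : H ⊗[k] H →ₗ[k] H) := by
  have hδ : (Coalgebra.comul (R := k) (A := H ⊗[k] H)) =
      (TensorProduct.tensorTensorTensorComm k H H H H).toLinearMap ∘ₗ
        TensorProduct.map Coalgebra.comul Coalgebra.comul := rfl
  have h1 : LinearMap.mul' k H ∘ₗ
        TensorProduct.map (HopfAlgebra.antipode (R := k) ∘ₗ LinearMap.mul' k H)
          (LinearMap.mul' k H) ∘ₗ
        (TensorProduct.tensorTensorTensorComm k H H H H).toLinearMap =
      (LinearMap.mul' k H ∘ₗ (HopfAlgebra.antipode (R := k)).rTensor H) ∘ₗ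
        LinearMap.mul' k (H ⊗[k] H) := by
    ext a b c d
    simp
  have h2 : LinearMap.mul' k (H ⊗[k] H) ∘ₗ
        TensorProduct.map (Coalgebra.comul (R := k)) (Coalgebra.comul (R := k)) =
      (Coalgebra.comul (R := k) (A := H)) ∘ₗ LinearMap.mul' k H := by
    ext a b
    simp
  unfold conv _root_.convOne
  rw [hδ]
  simp only [← LinearMap.comp_assoc] at h1 ⊢
  rw [h1]
  simp only [LinearMap.comp_assoc]
  rw [h2]
  have h3 := congrArg (fun f : H →ₗ[k] H => f ∘ₗ LinearMap.mul' k H)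
    (HopfAlgebra.mul_antipode_rTensor_comul (R := k) (A := H))
  simp only [← LinearMap.comp_assoc] at h3 ⊢
  rw [h3]
  ext a b
  simp
  exact Algebra.commutes _ _

lemma hB1 : LinearMap.mul' k H ∘ₗ
      TensorProduct.map (LinearMap.mul' k H) (Gmap (k := k) (H := H)) ∘ₗ
      (TensorProduct.tensorTensorTensorComm k H H H H).toLinearMap =
    Kmap ∘ₗ LinearMap.lTensor (H ⊗[k] H) (Pmap (k := k) (H := H)) := by
  ext a b c d
  simp [Gmap, Kmap, Pmap, mul_assoc]

lemma hB2 : LinearMap.lTensor (H ⊗[k] H) (Pmap (k := k) (H := H)) ∘ₗ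
      TensorProduct.map (Coalgebra.comul (R := k)) (Coalgebra.comul (R := k)) =
    TensorProduct.map (Coalgebra.comul (R := k))
      (Pmap ∘ₗ (Coalgebra.comul (R := k) (A := H))) := by
  ext a b
  simp

lemma hB3 : TensorProduct.map (Coalgebra.comul (R := k) (A := H))
      (Algebra.linearMap k H ∘ₗ (Coalgebra.counit (R := k) (A := H))) =
    LinearMap.lTensor (H ⊗[k] H) (Algebra.linearMap k H) ∘ₗ
      TensorProduct.map (Coalgebra.comul (R := k)) (Coalgebra.counit (R := k) (A := H)) := by
  ext a b
  simp

lemma hB4 : (Kmap (k := k) (H := H)) ∘ₗ LinearMap.lTensor (H ⊗[k] H) (Algebra.linearMap k H) =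
    Pmap ∘ₗ (TensorProduct.rid k (H ⊗[k] H)).toLinearMap := by
  ext a b
  simp [Kmap, Pmap, Algebra.smul_def, mul_assoc]

lemma hB5 : (TensorProduct.rid k (H ⊗[k] H)).toLinearMap ∘ₗ
      TensorProduct.map (Coalgebra.comul (R := k)) (Coalgebra.counit (R := k) (A := H)) =
    (Coalgebra.comul (R := k) (A := H)) ∘ₗ μmap := by
  ext a b
  simp [μmap, Algebra.smul_def]
  have := Algebra.commutes (R := k) (A := H ⊗[k] H) (Coalgebra.counit (R := k) b)
    (Coalgebra.comul (R := k) a)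
  simpa [Algebra.TensorProduct.algebraMap_apply] using this

lemma hB6 : (Algebra.linearMap k H ∘ₗ (Coalgebra.counit (R := k) (A := H))) ∘ₗ
      (μmap (k := k) (H := H)) =
    Algebra.linearMap k H ∘ₗ (Coalgebra.counit (R := k) (A := H ⊗[k] H)) := by
  ext a b
  simp [μmap]
  exact Algebra.commutes _ _

lemma hP : (Pmap (k := k) (H := H)) ∘ₗ (Coalgebra.comul (R := k) (A := H)) =
    Algebra.linearMap k H ∘ₗ (Coalgebra.counit (R := k) (A := H)) := by
  rw [Pmap, LinearMap.comp_assoc, HopfAlgebra.mul_antipode_lTensor_comul]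

lemma claimB :
    conv (LinearMap.mul' k H) (Gmap (k := k) (H := H)) = (convOne : H ⊗[k] H →ₗ[k] H) := by
  have hδ : (Coalgebra.comul (R := k) (A := H ⊗[k] H)) =
      (TensorProduct.tensorTensorTensorComm k H H H H).toLinearMap ∘ₗ
        TensorProduct.map Coalgebra.comul Coalgebra.comul := rfl
  unfold conv _root_.convOne
  rw [hδ]
  have h1 := hB1 (k := k) (H := H)
  simp only [← LinearMap.comp_assoc] at h1 ⊢
  rw [h1]
  simp only [LinearMap.comp_assoc]
  rw [hB2, hP, hB3]
  simp only [← LinearMap.comp_assoc]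
  rw [hB4]
  simp only [LinearMap.comp_assoc]
  rw [hB5]
  simp only [← LinearMap.comp_assoc]
  rw [hP, hB6]

lemma my_antipode_mul (a b : H) :
    HopfAlgebra.antipode (R := k) (a * b) =
      HopfAlgebra.antipode (R := k) b * HopfAlgebra.antipode (R := k) a := by
  have h := conv_eq_of (HopfAlgebra.antipode (R := k) ∘ₗ LinearMap.mul' k H)
    (LinearMap.mul' k H) Gmap claimA claimB
  have h2 := LinearMap.congr_fun h (a ⊗ₜ[k] b)
  simpa [Gmap] using h2

end AntipodeMul

/-- Let `H` be a Hopf algebra with an invertible element `u` (inverse `u'`) such that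
`S²(h) = u h u⁻¹` for all `h`, and a central invertible element `θ` (inverse `θ'`) with
`θ² = u S(u)`.  Set `σ = θ⁻¹ u` (so `σ⁻¹ = u⁻¹ θ`) and assume `S(σ) = σ⁻¹`.  Then the map
`S'(h) = σ⁻¹ S(h)` satisfies `S'² = identity`, i.e. `σ⁻¹ S(σ⁻¹ S(h)) = h` for all `h ∈ H`;
hence `(ε, σ)` is a modular pair in involution for `H`. -/
theorem ribbon_modular_pair_in_involution (k H : Type) [Field k] [Ring H] [HopfAlgebra k H]
    (u u' θ θ' : H)
    (hu : u * u' = 1) (hu' : u' * u = 1)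
    (hθcentral : ∀ h : H, θ * h = h * θ)
    (hθ : θ * θ' = 1) (hθ' : θ' * θ = 1)
    (hθsq : θ * θ = u * HopfAlgebra.antipode (R := k) u)
    (hS2 : ∀ h : H, HopfAlgebra.antipode (R := k) (HopfAlgebra.antipode (R := k) h)
      = u * h * u')
    (hSσ : HopfAlgebra.antipode (R := k) (θ' * u) = u' * θ) :
    ∀ h : H,
      (u' * θ) * HopfAlgebra.antipode (R := k)
        ((u' * θ) * HopfAlgebra.antipode (R := k) h) = h := by
  intro h
  have Smul : ∀ a b : H, HopfAlgebra.antipode (R := k) (a * b) =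
      HopfAlgebra.antipode (R := k) b * HopfAlgebra.antipode (R := k) a :=
    fun a b => my_antipode_mul a b
  have S1 : HopfAlgebra.antipode (R := k) (1 : H) = 1 := my_antipode_one
  have h1 : (u' * θ) * (θ' * u) = 1 := by
    rw [mul_assoc, ← mul_assoc θ θ' u, hθ, one_mul, hu']
  have h2 : (θ' * u) * (u' * θ) = 1 := by
    rw [mul_assoc, ← mul_assoc u u' θ, hu, one_mul, hθ']
  have e1 : HopfAlgebra.antipode (R := k) (u' * θ) * (u' * θ) = 1 := by
    calc HopfAlgebra.antipode (R := k) (u' * θ) * (u' * θ)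
        = HopfAlgebra.antipode (R := k) (u' * θ) * HopfAlgebra.antipode (R := k) (θ' * u) := by
          rw [hSσ]
      _ = HopfAlgebra.antipode (R := k) ((θ' * u) * (u' * θ)) := (Smul _ _).symm
      _ = 1 := by rw [h2, S1]
  have hSσ' : HopfAlgebra.antipode (R := k) (u' * θ) = θ' * u := by
    calc HopfAlgebra.antipode (R := k) (u' * θ)
        = HopfAlgebra.antipode (R := k) (u' * θ) * ((u' * θ) * (θ' * u)) := by
          rw [h1, mul_one]
      _ = (HopfAlgebra.antipode (R := k) (u' * θ) * (u' * θ)) * (θ' * u) := by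
          simp only [mul_assoc]
      _ = θ' * u := by rw [e1, one_mul]
  rw [Smul, hS2 h, hSσ']
  -- goal : (u' * θ) * (u * h * u' * (θ' * u)) = h
  simp only [mul_assoc]
  rw [← mul_assoc θ u, hθcentral u, mul_assoc u θ]
  rw [← mul_assoc u' u, hu', one_mul]
  rw [← mul_assoc θ h, hθcentral h, mul_assoc h θ]
  rw [← mul_assoc θ u', hθcentral u', mul_assoc u' θ]
  rw [← mul_assoc θ θ', hθ, one_mul, hu', mul_one]
end
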